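/- arXiv:2504.00523 — 2 statements merged into one kernel-verified Lean document; each statement's English description precedes it below -/
import Mathlib

section
/- Let A be the max-linear coefficient matrix of a recursive max-linear model on a DAG, let i∈V and j∈an(i), and let k∈de(j)∩an(i). If a_{ij} = a_{ik} a_{kj} / a_{kk}, then every max-weighted path from j to i passing through k realizes a_{ij}; conversely, if every path j⇝i passes through k and a path through k is max-weighted, then a_{ij} = a_{ik} a_{kj}/a_{kk} provided the sub-paths j⇝k and k⇝i are max-weighted. -/
open scoped BigOperators

/-- A path in the directed graph with edge relation `E` (E k i meaning edge
k → i) from `j` to `i`, represented by the list of its nodes. -/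
def IsPathList {d : ℕ} (E : Fin d → Fin d → Prop) (j i : Fin d)
    (l : List (Fin d)) : Prop :=
  l.head? = some j ∧ l.getLast? = some i ∧ l.Chain' E

/-- The weight d(p) = c_{jj}·c_{ℓ₁ℓ₀}···c_{ℓ_mℓ_{m-1}} of a path. -/
noncomputable def pathWeight {d : ℕ} (c : Fin d → Fin d → ℝ) :
    List (Fin d) → ℝ
  | [] => 1
  | x :: xs => c x x * (((x :: xs).zip xs).map fun p => c p.2 p.1).prod

/-- The max-linear coefficient a_{ij} = max over paths j ⇝ i of the path
weight (0 when no path exists). -/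
noncomputable def mlCoeff {d : ℕ} (E : Fin d → Fin d → Prop)
    (c : Fin d → Fin d → ℝ) (i j : Fin d) : ℝ :=
  sSup {w | ∃ l, IsPathList E j i l ∧ pathWeight c l = w}

/-! A path `j ⇝ i` through `k` splits at `k` into paths `j ⇝ k` and `k ⇝ i`, and conversely such
paths glue to a path `j ⇝ i`. Path weights are multiplicative under this splitting up to the factor
`c k k`, which both halves count; and `a_kk = c_kk` because in a DAG the only path `k ⇝ k` is `[k]`.
Acyclicity also bounds the length of paths, so each `a_ij` is a maximum over a finite set; this
gives `a_ij ≤ a_ik a_kj / c_kk` when every path `j ⇝ i` passes through `k`, while gluing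
max-weighted paths gives `a_ik a_kj / c_kk ≤ a_ij` and the first claim. -/

section

variable {d : ℕ} {E : Fin d → Fin d → Prop} {c : Fin d → Fin d → ℝ}

noncomputable def edgeWeight (c : Fin d → Fin d → ℝ) (l : List (Fin d)) : ℝ :=
  (l.consecutivePairs.map fun p => c p.2 p.1).prod

@[simp]
lemma edgeWeight_nil : edgeWeight c [] = 1 := rfl

@[simp]
lemma edgeWeight_singleton (x : Fin d) : edgeWeight c [x] = 1 := rfl

lemma edgeWeight_cons_cons (x y : Fin d) (l : List (Fin d)) :
    edgeWeight c (x :: y :: l) = c y x * edgeWeight c (y :: l) := by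
  simp [edgeWeight, List.consecutivePairs]

lemma edgeWeight_append_cons (k : Fin d) (t : List (Fin d)) :
    ∀ l : List (Fin d), edgeWeight c (l ++ k :: t) = edgeWeight c (l ++ [k]) * edgeWeight c (k :: t)
  | [] => by simp
  | [x] => by simp [edgeWeight_cons_cons]
  | x :: y :: l => by
    simp only [List.cons_append, edgeWeight_cons_cons]
    rw [← List.cons_append, edgeWeight_append_cons k t (y :: l), List.cons_append, mul_assoc]

lemma edgeWeight_pos (hedgepos : ∀ i k, E k i → 0 < c i k) :
    ∀ l : List (Fin d), l.IsChain E → 0 < edgeWeight c l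
  | [], _ => by simp
  | [_], _ => by simp
  | x :: y :: l, h => by
    rw [edgeWeight_cons_cons]
    exact mul_pos (hedgepos _ _ (List.isChain_cons_cons.1 h).1)
      (edgeWeight_pos hedgepos _ (List.isChain_cons_cons.1 h).2)

lemma pathWeight_cons (x : Fin d) (l : List (Fin d)) :
    pathWeight c (x :: l) = c x x * edgeWeight c (x :: l) := rfl

@[simp]
lemma pathWeight_singleton (x : Fin d) : pathWeight c [x] = c x x := by
  simp [pathWeight_cons]

lemma pathWeight_append_cons (l : List (Fin d)) (k : Fin d) (t : List (Fin d)) :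
    pathWeight c (l ++ k :: t) * c k k = pathWeight c (l ++ [k]) * pathWeight c (k :: t) := by
  cases l with
  | nil => simp [mul_comm]
  | cons x l =>
    simp only [List.cons_append, pathWeight_cons]
    rw [← List.cons_append, ← List.cons_append, edgeWeight_append_cons]
    ring

lemma pathWeight_pos (hdiagpos : ∀ i, 0 < c i i) (hedgepos : ∀ i k, E k i → 0 < c i k) :
    ∀ l : List (Fin d), l.IsChain E → 0 < pathWeight c l
  | [], _ => zero_lt_one
  | x :: _, h => mul_pos (hdiagpos x) (edgeWeight_pos hedgepos _ h)

lemma isPathList_append_cons_iff {j i k : Fin d} {p q : List (Fin d)} :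
    IsPathList E j i (p ++ k :: q) ↔ IsPathList E j k (p ++ [k]) ∧ IsPathList E k i (k :: q) := by
  have hhead : (p ++ k :: q).head? = (p ++ [k]).head? := by simp [List.head?_append]
  unfold IsPathList
  rw [hhead, List.getLast?_append_cons]
  exact ⟨fun ⟨hj, hi, hc⟩ => ⟨⟨hj, by simp, (List.isChain_split.1 hc).1⟩, rfl, hi,
      (List.isChain_split.1 hc).2⟩,
    fun ⟨⟨hj, _, hc₁⟩, _, hi, hc₂⟩ => ⟨hj, hi, List.isChain_split.2 ⟨hc₁, hc₂⟩⟩⟩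

end

namespace IsPathList

variable {d : ℕ} {E : Fin d → Fin d → Prop} {c : Fin d → Fin d → ℝ} {j i k : Fin d}
  {l l₁ l₂ : List (Fin d)}

lemma exists_eq_cons (h : IsPathList E j i l) : ∃ q, l = j :: q :=
  List.head?_eq_some_iff.1 h.1

lemma exists_eq_append_singleton (h : IsPathList E j i l) : ∃ p, l = p ++ [i] :=
  List.getLast?_eq_some_iff.1 h.2.1

lemma nodup (hacyc : ∀ i : Fin d, ¬ Relation.TransGen E i i) (h : IsPathList E j i l) :
    l.Nodup :=
  ((h.2.2.imp fun _ _ => Relation.TransGen.single).pairwise).imp (S := (· ≠ ·))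
    fun hxy hxy' => hacyc _ (hxy' ▸ hxy)

lemma eq_singleton (hacyc : ∀ i : Fin d, ¬ Relation.TransGen E i i) (h : IsPathList E k k l) :
    l = [k] := by
  obtain ⟨q, rfl⟩ := h.exists_eq_cons
  cases q with
  | nil => rfl
  | cons y q =>
    have hk : k ∈ y :: q := List.mem_of_mem_getLast? (by simpa using h.2.1)
    exact absurd hk (List.nodup_cons.1 (h.nodup hacyc)).1

lemma append_tail (h₁ : IsPathList E j k l₁) (h₂ : IsPathList E k i l₂) :
    IsPathList E j i (l₁ ++ l₂.tail) := by
  obtain ⟨p, rfl⟩ := h₁.exists_eq_append_singleton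
  obtain ⟨q, rfl⟩ := h₂.exists_eq_cons
  simpa using isPathList_append_cons_iff.2 ⟨h₁, h₂⟩

lemma pathWeight_append_tail (h₁ : IsPathList E j k l₁) (h₂ : IsPathList E k i l₂) :
    pathWeight c (l₁ ++ l₂.tail) * c k k = pathWeight c l₁ * pathWeight c l₂ := by
  obtain ⟨p, rfl⟩ := h₁.exists_eq_append_singleton
  obtain ⟨q, rfl⟩ := h₂.exists_eq_cons
  simpa using pathWeight_append_cons p k q

end IsPathList

section

variable {d : ℕ} {E : Fin d → Fin d → Prop} {c : Fin d → Fin d → ℝ}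

lemma finite_pathWeights (hacyc : ∀ i : Fin d, ¬ Relation.TransGen E i i) (i j : Fin d) :
    {w | ∃ l, IsPathList E j i l ∧ pathWeight c l = w}.Finite := by
  refine ((List.finite_length_le (Fin d) d).image (pathWeight c)).subset ?_
  rintro w ⟨l, hl, rfl⟩
  exact ⟨l, by simpa using (hl.nodup hacyc).length_le_card, rfl⟩

lemma pathWeight_le_mlCoeff (hacyc : ∀ i : Fin d, ¬ Relation.TransGen E i i) {i j : Fin d}
    {l : List (Fin d)} (hl : IsPathList E j i l) : pathWeight c l ≤ mlCoeff E c i j :=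
  le_csSup (finite_pathWeights hacyc i j).bddAbove ⟨l, hl, rfl⟩

lemma mlCoeff_le {i j : Fin d} {b : ℝ} (hne : ∃ l, IsPathList E j i l)
    (hb : ∀ l, IsPathList E j i l → pathWeight c l ≤ b) : mlCoeff E c i j ≤ b := by
  obtain ⟨l, hl⟩ := hne
  exact csSup_le ⟨_, l, hl, rfl⟩ fun _ ⟨l, hl, hw⟩ => hw ▸ hb l hl

lemma mlCoeff_self (hacyc : ∀ i : Fin d, ¬ Relation.TransGen E i i) (k : Fin d) :
    mlCoeff E c k k = c k k := by
  have hk : IsPathList E k k [k] := ⟨rfl, rfl, List.isChain_singleton k⟩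
  refine le_antisymm (mlCoeff_le ⟨_, hk⟩ fun l hl => ?_) ?_
  · rw [hl.eq_singleton hacyc, pathWeight_singleton]
  · simpa using pathWeight_le_mlCoeff (c := c) hacyc hk

lemma mlCoeff_mul_le_of_forall_mem (hacyc : ∀ i : Fin d, ¬ Relation.TransGen E i i)
    (hdiagpos : ∀ i, 0 < c i i) (hedgepos : ∀ i k, E k i → 0 < c i k) {i j k : Fin d}
    (hne : ∃ l, IsPathList E j i l) (hthrough : ∀ l, IsPathList E j i l → k ∈ l) :
    mlCoeff E c i j * c k k ≤ mlCoeff E c i k * mlCoeff E c k j := by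
  rw [← le_div_iff₀ (hdiagpos k)]
  refine mlCoeff_le hne fun l hl => ?_
  obtain ⟨p, q, rfl⟩ := List.append_of_mem (hthrough l hl)
  obtain ⟨hp, hq⟩ := isPathList_append_cons_iff.1 hl
  rw [le_div_iff₀ (hdiagpos k), pathWeight_append_cons, mul_comm]
  exact mul_le_mul (pathWeight_le_mlCoeff hacyc hq) (pathWeight_le_mlCoeff hacyc hp)
    (pathWeight_pos hdiagpos hedgepos _ hp.2.2).le
    ((pathWeight_pos hdiagpos hedgepos _ hq.2.2).le.trans (pathWeight_le_mlCoeff hacyc hq))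

end

theorem max_weighted_path_through_k_general {d : ℕ}
    (E : Fin d → Fin d → Prop) (c : Fin d → Fin d → ℝ)
    (hacyc : ∀ i, ¬ Relation.TransGen E i i)
    (hdiagpos : ∀ i, 0 < c i i)
    (hedgepos : ∀ i k, E k i → 0 < c i k)
    (i j k : Fin d) :
    ((mlCoeff E c i j = mlCoeff E c i k * mlCoeff E c k j / mlCoeff E c k k →
        ∀ l₁ l₂ : List (Fin d),
          IsPathList E j k l₁ → pathWeight c l₁ = mlCoeff E c k j →
          IsPathList E k i l₂ → pathWeight c l₂ = mlCoeff E c i k →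
          IsPathList E j i (l₁ ++ l₂.tail)
            ∧ pathWeight c (l₁ ++ l₂.tail) = mlCoeff E c i j)
      ∧ ((∀ l : List (Fin d), IsPathList E j i l → k ∈ l) →
          (∃ l₁, IsPathList E j k l₁ ∧ pathWeight c l₁ = mlCoeff E c k j) →
          (∃ l₂, IsPathList E k i l₂ ∧ pathWeight c l₂ = mlCoeff E c i k) →
          mlCoeff E c i j = mlCoeff E c i k * mlCoeff E c k j / mlCoeff E c k k)) := by
  rw [mlCoeff_self hacyc k]
  have hckk := (hdiagpos k).ne'
  constructor
  · intro hyp l₁ l₂ h₁ hw₁ h₂ hw₂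
    refine ⟨h₁.append_tail h₂, ?_⟩
    rw [hyp, eq_div_iff hckk, h₁.pathWeight_append_tail h₂, hw₁, hw₂, mul_comm]
  · rintro hthrough ⟨l₁, h₁, hw₁⟩ ⟨l₂, h₂, hw₂⟩
    rw [eq_div_iff hckk]
    refine le_antisymm
      (mlCoeff_mul_le_of_forall_mem hacyc hdiagpos hedgepos ⟨_, h₁.append_tail h₂⟩ hthrough) ?_
    calc mlCoeff E c i k * mlCoeff E c k j = pathWeight c (l₁ ++ l₂.tail) * c k k := by
          rw [h₁.pathWeight_append_tail h₂, hw₁, hw₂, mul_comm]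
      _ ≤ mlCoeff E c i j * c k k :=
          mul_le_mul_of_nonneg_right (pathWeight_le_mlCoeff hacyc (h₁.append_tail h₂))
            (hdiagpos k).le

/-- Let A be the max-linear coefficient matrix of a recursive
max-linear model on a DAG, i ∈ V, j ∈ an(i), k ∈ de(j) ∩ an(i).
(1) If a_{ij} = a_{ik}a_{kj}/a_{kk}, then any concatenation of a max-weighted
path j ⇝ k (weight a_{kj}) with a max-weighted path k ⇝ i (weight a_{ik}) is a
path j ⇝ i through k realizing a_{ij}.
(2) Conversely, if every path j ⇝ i passes through k and max-weighted sub-paths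
j ⇝ k and k ⇝ i exist, then a_{ij} = a_{ik}a_{kj}/a_{kk}. -/
theorem max_weighted_path_through_k {d : ℕ}
    (E : Fin d → Fin d → Prop) (c : Fin d → Fin d → ℝ)
    (hacyc : ∀ i, ¬ Relation.TransGen E i i)
    (hdiagpos : ∀ i, 0 < c i i)
    (hedgepos : ∀ i k, E k i → 0 < c i k)
    (i j k : Fin d)
    (hji : Relation.TransGen E j i)
    (hjk : Relation.TransGen E j k)
    (hki : Relation.TransGen E k i) :
    ((mlCoeff E c i j = mlCoeff E c i k * mlCoeff E c k j / mlCoeff E c k k →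
        ∀ l₁ l₂ : List (Fin d),
          IsPathList E j k l₁ → pathWeight c l₁ = mlCoeff E c k j →
          IsPathList E k i l₂ → pathWeight c l₂ = mlCoeff E c i k →
          IsPathList E j i (l₁ ++ l₂.tail)
            ∧ pathWeight c (l₁ ++ l₂.tail) = mlCoeff E c i j)
      ∧ ((∀ l : List (Fin d), IsPathList E j i l → k ∈ l) →
          (∃ l₁, IsPathList E j k l₁ ∧ pathWeight c l₁ = mlCoeff E c k j) →
          (∃ l₂, IsPathList E k i l₂ ∧ pathWeight c l₂ = mlCoeff E c i k) →
          mlCoeff E c i j = mlCoeff E c i k * mlCoeff E c k j / mlCoeff E c k k)) :=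
  max_weighted_path_through_k_general E c hacyc hdiagpos hedgepos i j k
end

section
/- Let A be upper triangular, row-standardized with columnwise diagonal dominance (a_{ℓℓ}>a_{kℓ} for k≠ℓ). Then for 1≤i<j≤d−1: a_{ij}² = (σ²_{M_{i,j+1,...,d}} − σ²_{M_{j+1,...,d}}) − (σ²_{M_{i,j,...,d}} − σ²_{M_{j,...,d}}), where σ²_{M_I} = Σ_{ℓ∈V} max_{k∈I} a_{kℓ}². Consequently the row-vectorized vector A² of squared entries is a linear transformation A² = T S_M of the vector S_M of d(d+1)/2 squared scalings, for an explicit integer matrix T with entries in {−1,0,1}. -/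
/-!
In column `ℓ`, the largest `a_{kℓ}²` over `k ∈ {a} ∪ I`, for an upper set `I` of rows, is the
diagonal entry `a_{ℓℓ}²` when `ℓ ∈ I` (diagonal dominance) and `a_{aℓ}²` otherwise, since every
other row of `I` vanishes in that column (upper triangularity); over `I` alone it is `0` otherwise.
Hence `σ²_{M_{{a} ∪ I}} - σ²_{M_I} = ∑_{ℓ ∉ I} a_{aℓ}²` is a partial row sum, and the difference of
the cases `I = {j+1, …, d}` and `I = {j, …, d}` isolates `a_{ij}²`. The matrix `T` is obtained by
rewriting the four scalings of that formula as scalings of sets `{a, b+1, …, d}` with `a ≤ b`: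
`{j+1, …, d} = {j+1, j+2, …, d}`, `{i, j, …, d} = {i, (j-1)+1, …, d}` and `{j, …, d} = {j, j+1, …, d}`.
-/

open Finset Order

lemma Real.biSup_eq_of_forall_le {ι : Type*} {s : Finset ι} {f : ι → ℝ} {m : ι} (hm : m ∈ s)
    (hle : ∀ k ∈ s, f k ≤ f m) (h0 : 0 ≤ f m) : ⨆ k ∈ s, f k = f m := by
  refine le_antisymm (Real.iSup_le (fun k => Real.iSup_le (hle k) h0) h0) ?_
  have hbdd : BddAbove (Set.range fun k => ⨆ _ : k ∈ s, f k) :=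
    ⟨f m, Set.forall_mem_range.2 fun k => Real.iSup_le (hle k) h0⟩
  exact le_ciSup_of_le hbdd m (ciSup_pos (f := fun _ => f m) hm).ge

lemma Real.biSup_eq_zero {ι : Type*} {s : Finset ι} {f : ι → ℝ} (h : ∀ k ∈ s, f k = 0) :
    ⨆ k ∈ s, f k = 0 := by
  simp +contextual [h]

lemma Fintype.sum_subtype_ite_and_val_eq_mul {α : Type*} {P : α → Prop} [Fintype {a // P a}]
    [DecidableEq α] (c : Prop) [Decidable c] {x : α} (hx : c → P x) (g : α → ℝ) :
    ∑ q : {a // P a}, (if c ∧ q.1 = x then 1 else 0) * g q.1 = if c then g x else 0 := by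
  split_ifs with hc
  · rw [Fintype.sum_eq_single ⟨x, hx hc⟩ fun q hq => by
      rw [if_neg fun h => hq (Subtype.ext h.2), zero_mul]]
    simp [hc]
  · simp [hc]

lemma ite_sub_ite_add_ite_sub_ite_mem {a b c d : Prop} [Decidable a] [Decidable b] [Decidable c]
    [Decidable d] (hac : a → ¬c) (hbd : b → ¬d) :
    (if a then 1 else 0) - (if b then 1 else 0) + (if c then 1 else 0) - (if d then 1 else 0)
      ∈ ({-1, 0, 1} : Set ℝ) := by
  by_cases a <;> by_cases b <;> by_cases c <;> by_cases d <;> simp_all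

variable {ι : Type*} [LinearOrder ι]

section ColumnMaxima

variable {A : ι → ι → ℝ} (hut : ∀ i j, j < i → A i j = 0) (hdom : ∀ k ℓ, A k ℓ ^ 2 ≤ A ℓ ℓ ^ 2)
  {I : Finset ι} (hI : IsUpperSet (I : Set ι))
include hut hdom hI

lemma biSup_sq_insert_of_isUpperSet (a ℓ : ι) :
    ⨆ k ∈ insert a I, A k ℓ ^ 2 = if ℓ ∈ I then A ℓ ℓ ^ 2 else A a ℓ ^ 2 := by
  split_ifs with hℓ
  · exact Real.biSup_eq_of_forall_le (mem_insert_of_mem hℓ) (fun k _ => hdom k ℓ) (sq_nonneg _)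
  · refine Real.biSup_eq_of_forall_le (mem_insert_self a I) (fun k hk => ?_) (sq_nonneg _)
    rcases mem_insert.1 hk with rfl | hk
    · exact le_rfl
    · rw [hut k ℓ (lt_of_not_ge fun h => hℓ (hI h hk))]
      simpa using sq_nonneg (A a ℓ)

lemma biSup_sq_of_isUpperSet (ℓ : ι) :
    ⨆ k ∈ I, A k ℓ ^ 2 = if ℓ ∈ I then A ℓ ℓ ^ 2 else 0 := by
  split_ifs with hℓ
  · exact Real.biSup_eq_of_forall_le hℓ (fun k _ => hdom k ℓ) (sq_nonneg _)
  · exact Real.biSup_eq_zero fun k hk => by rw [hut k ℓ (lt_of_not_ge fun h => hℓ (hI h hk))]; simp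

end ColumnMaxima

variable [Fintype ι]

/-- The squared scaling `σ²_{M_I}` of the paper. -/
noncomputable def scaling (A : ι → ι → ℝ) (I : Finset ι) : ℝ := ∑ ℓ, ⨆ k ∈ I, A k ℓ ^ 2

section UpperTriangular

variable {A : ι → ι → ℝ} (hut : ∀ i j, j < i → A i j = 0) (hdom : ∀ k ℓ, A k ℓ ^ 2 ≤ A ℓ ℓ ^ 2)
include hut hdom

lemma scaling_insert_sub_scaling {I : Finset ι} (hI : IsUpperSet (I : Set ι)) (a : ι) :
    scaling A (insert a I) - scaling A I = ∑ ℓ ∈ Iᶜ, A a ℓ ^ 2 := by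
  simp only [scaling, ← sum_sub_distrib, biSup_sq_insert_of_isUpperSet hut hdom hI,
    biSup_sq_of_isUpperSet hut hdom hI, apply_ite₂ (· - ·), sub_self, sub_zero]
  simp [sum_ite, filter_not, compl_eq_univ_sdiff]

lemma sq_eq_scaling_sub [LocallyFiniteOrderTop ι] (i j : ι) :
    A i j ^ 2 = (scaling A (insert i (Ioi j)) - scaling A (Ioi j))
      - (scaling A (insert i (Ici j)) - scaling A (Ici j)) := by
  rw [scaling_insert_sub_scaling hut hdom (by simpa using isUpperSet_Ioi j),
    scaling_insert_sub_scaling hut hdom (by simpa using isUpperSet_Ici j), ← Ioi_insert,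
    compl_insert, sum_erase_eq_sub (by simp), sub_sub_cancel]

end UpperTriangular

section Intervals

variable [LocallyFiniteOrderTop ι] (A : ι → ι → ℝ)

lemma scaling_Ioi [SuccOrder ι] (j : ι) :
    scaling A (Ioi j) = if j < succ j then scaling A (insert (succ j) (Ioi (succ j))) else 0 := by
  split_ifs with hj
  · rw [Ioi_insert, Ici_succ_eq_Ioi_of_not_isMax (not_isMax_iff.2 ⟨_, hj⟩)]
  · simp [scaling, Ioi_eq_empty.2 (lt_succ_iff_not_isMax.not_left.1 hj)]

lemma scaling_insert_Ici_sub [PredOrder ι] {i j : ι} (hij : i ≤ j) :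
    scaling A (insert i (Ici j)) - scaling A (Ici j) =
      if i < j then scaling A (insert i (Ioi (pred j))) - scaling A (insert j (Ioi j)) else 0 := by
  split_ifs with hlt
  · rw [Ioi_pred_eq_Ici_of_not_isMin (not_isMin_of_lt hlt), Ioi_insert]
  · rw [insert_eq_of_mem (mem_Ici.2 (le_antisymm hij (not_lt.1 hlt)).ge), sub_self]

end Intervals

section Transform

variable [SuccOrder ι] [PredOrder ι]

/-- Row `(i, j)` of `T`, with `S(a, b) = scaling A (insert a (Ioi b))`:
`a_{ij}² = S(i, j) - S(i, j-1) + S(j, j) - S(j+1, j+1)`, where the two middle terms occur only for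
`i < j` and the last one only when `j` is not the last index (`j < succ j`). -/
def scalingTransform (p q : {p : ι × ι // p.1 ≤ p.2}) : ℝ :=
  (if q = p then 1 else 0)
    - (if p.1.1 < p.1.2 ∧ q.1 = (p.1.1, pred p.1.2) then 1 else 0)
    + (if p.1.1 < p.1.2 ∧ q.1 = (p.1.2, p.1.2) then 1 else 0)
    - (if p.1.2 < succ p.1.2 ∧ q.1 = (succ p.1.2, succ p.1.2) then 1 else 0)

omit [Fintype ι] in
lemma scalingTransform_mem (p q : {p : ι × ι // p.1 ≤ p.2}) :
    scalingTransform p q = -1 ∨ scalingTransform p q = 0 ∨ scalingTransform p q = 1 := by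
  obtain ⟨⟨i, j⟩, hij⟩ := p
  refine ite_sub_ite_add_ite_sub_ite_mem ?_ ?_
  · rintro rfl ⟨hlt, h⟩
    exact hlt.ne (Prod.ext_iff.1 h).1
  · rintro ⟨hlt, h⟩ ⟨hj, h'⟩
    exact (hlt.trans hj).ne (Prod.ext_iff.1 (h.symm.trans h')).1

lemma sum_scalingTransform_mul (p : {p : ι × ι // p.1 ≤ p.2}) (s : ι × ι → ℝ) :
    ∑ q, scalingTransform p q * s q =
      s p - (if p.1.1 < p.1.2 then s (p.1.1, pred p.1.2) else 0)
        + (if p.1.1 < p.1.2 then s (p.1.2, p.1.2) else 0)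
        - (if p.1.2 < succ p.1.2 then s (succ p.1.2, succ p.1.2) else 0) := by
  obtain ⟨⟨i, j⟩, hij⟩ := p
  simp only [scalingTransform, sub_mul, add_mul, sum_sub_distrib, sum_add_distrib]
  rw [Fintype.sum_subtype_ite_and_val_eq_mul _ ?_, Fintype.sum_subtype_ite_and_val_eq_mul _ ?_,
    Fintype.sum_subtype_ite_and_val_eq_mul _ ?_]
  · simp
  exacts [fun _ => le_rfl, fun _ => le_rfl, le_pred_of_lt]

lemma sq_eq_sum_scalingTransform_mul [LocallyFiniteOrderTop ι] {A : ι → ι → ℝ}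
    (hut : ∀ i j, j < i → A i j = 0) (hdom : ∀ k ℓ, A k ℓ ^ 2 ≤ A ℓ ℓ ^ 2)
    (p : {p : ι × ι // p.1 ≤ p.2}) :
    A p.1.1 p.1.2 ^ 2 = ∑ q, scalingTransform p q * scaling A (insert q.1.1 (Ioi q.1.2)) := by
  obtain ⟨⟨i, j⟩, hij⟩ := p
  rw [sum_scalingTransform_mul _ fun q => scaling A (insert q.1 (Ioi q.2)),
    sq_eq_scaling_sub hut hdom, scaling_Ioi, scaling_insert_Ici_sub A hij]
  split_ifs <;> ring

end Transform

theorem squared_coefficients_linear_in_scalings_general {n : ℕ}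
    (A : Fin (n + 1) → Fin (n + 1) → ℝ)
    (hnn : ∀ i j, 0 ≤ A i j)
    (hdiag : ∀ ℓ k, k ≠ ℓ → A k ℓ < A ℓ ℓ)
    (hut : ∀ i j : Fin (n + 1), j < i → A i j = 0) :
    (∀ i j : Fin (n + 1), i < j → j < Fin.last n →
        (A i j) ^ 2 =
          ((∑ ℓ, ⨆ k ∈ insert i (Finset.Ioi j), (A k ℓ) ^ 2)
            - (∑ ℓ, ⨆ k ∈ Finset.Ioi j, (A k ℓ) ^ 2))
          - ((∑ ℓ, ⨆ k ∈ insert i (Finset.Ici j), (A k ℓ) ^ 2)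
            - (∑ ℓ, ⨆ k ∈ Finset.Ici j, (A k ℓ) ^ 2)))
    ∧ (∃ T : {p : Fin (n + 1) × Fin (n + 1) // p.1 ≤ p.2} →
            {p : Fin (n + 1) × Fin (n + 1) // p.1 ≤ p.2} → ℝ,
        (∀ p q, T p q = -1 ∨ T p q = 0 ∨ T p q = 1)
        ∧ ∀ p : {p : Fin (n + 1) × Fin (n + 1) // p.1 ≤ p.2},
            (A p.val.1 p.val.2) ^ 2 =
              ∑ q : {p : Fin (n + 1) × Fin (n + 1) // p.1 ≤ p.2},
                T p q * (∑ ℓ, ⨆ k ∈ insert q.val.1 (Finset.Ioi q.val.2), (A k ℓ) ^ 2)) := by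
  have hdom : ∀ k ℓ, A k ℓ ^ 2 ≤ A ℓ ℓ ^ 2 := fun k ℓ => by
    rcases eq_or_ne k ℓ with rfl | hkℓ
    · exact le_rfl
    · exact pow_le_pow_left₀ (hnn k ℓ) (hdiag ℓ k hkℓ).le 2
  exact ⟨fun i j _ _ => sq_eq_scaling_sub hut hdom i j,
    scalingTransform, scalingTransform_mem, sq_eq_sum_scalingTransform_mul hut hdom⟩

/-- For an upper triangular, row-standardized coefficient matrix
A with columnwise diagonal dominance, for 1 ≤ i < j ≤ d−1:
a_{ij}² = (σ²_{M_{i,j+1,…,d}} − σ²_{M_{j+1,…,d}}) − (σ²_{M_{i,j,…,d}} − σ²_{M_{j,…,d}}),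
where σ²_{M_I} = Σ_ℓ max_{k∈I} a_{kℓ}². Consequently the row-vectorized vector
A² of squared entries (indexed by pairs (i,j) with i ≤ j) is a linear
transformation A² = T S_M of the vector S_M of d(d+1)/2 squared scalings
S_M(i,j) = σ²_{M_{{i}∪{j+1,…,d}}}, for an explicit matrix T with entries in
{−1,0,1}. -/
theorem squared_coefficients_linear_in_scalings {n : ℕ}
    (A : Fin (n + 1) → Fin (n + 1) → ℝ)
    (hnn : ∀ i j, 0 ≤ A i j)
    (hrow : ∀ i, ∑ j, (A i j) ^ 2 = 1)
    (hdiag : ∀ ℓ k, k ≠ ℓ → A k ℓ < A ℓ ℓ)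
    (hut : ∀ i j : Fin (n + 1), j < i → A i j = 0) :
    (∀ i j : Fin (n + 1), i < j → j < Fin.last n →
        (A i j) ^ 2 =
          ((∑ ℓ, ⨆ k ∈ insert i (Finset.Ioi j), (A k ℓ) ^ 2)
            - (∑ ℓ, ⨆ k ∈ Finset.Ioi j, (A k ℓ) ^ 2))
          - ((∑ ℓ, ⨆ k ∈ insert i (Finset.Ici j), (A k ℓ) ^ 2)
            - (∑ ℓ, ⨆ k ∈ Finset.Ici j, (A k ℓ) ^ 2)))
    ∧ (∃ T : {p : Fin (n + 1) × Fin (n + 1) // p.1 ≤ p.2} →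
            {p : Fin (n + 1) × Fin (n + 1) // p.1 ≤ p.2} → ℝ,
        (∀ p q, T p q = -1 ∨ T p q = 0 ∨ T p q = 1)
        ∧ ∀ p : {p : Fin (n + 1) × Fin (n + 1) // p.1 ≤ p.2},
            (A p.val.1 p.val.2) ^ 2 =
              ∑ q : {p : Fin (n + 1) × Fin (n + 1) // p.1 ≤ p.2},
                T p q * (∑ ℓ, ⨆ k ∈ insert q.val.1 (Finset.Ioi q.val.2), (A k ℓ) ^ 2)) :=
  squared_coefficients_linear_in_scalings_general A hnn hdiag hut
end
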